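/- arXiv:0812.0156 — 5 statements merged into one kernel-verified Lean document; each statement's English description precedes it below -/
import Mathlib

section
/- For every integer k with 0 ≤ k ≤ |𝒯|, the number of tope committees of cardinality k for 𝒯 equals the number of tope committees of cardinality |𝒯| − k for 𝒯. -/
/-- The negation `−T` of a sign vector `T : E → Bool` (`true` = `+`, `false` = `−`). -/
def sgnNeg {E : Type*} (T : E → Bool) : E → Bool := fun e => !T e

/-- The positive part `T⁺` of a sign vector. -/
def positivePart {E : Type*} [Fintype E] [DecidableEq E] (T : E → Bool) : Finset E :=
  Finset.univ.filter fun e => T e = true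

/-- The negative part `T⁻` of a sign vector. -/
def negativePart {E : Type*} [Fintype E] [DecidableEq E] (T : E → Bool) : Finset E :=
  Finset.univ.filter fun e => T e = false

/-- `𝒦` is a tope committee for `𝒯`: `𝒦 ⊆ 𝒯`, and for every `e ∈ E` the number of members
of `𝒦` positive on `e` exceeds the number of members negative on `e`. -/
def IsCommittee {E : Type*} [Fintype E] [DecidableEq E]
    (𝒯 𝒦 : Finset (E → Bool)) : Prop :=
  𝒦 ⊆ 𝒯 ∧ ∀ e : E,
    (𝒦.filter fun K => K e = true).card > (𝒦.filter fun K => K e = false).card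

/-- `𝒜` is a tope anti-committee for `𝒯`: `𝒜 ⊆ 𝒯` and `−𝒜` is a tope committee for `𝒯`. -/
def IsAntiCommittee {E : Type*} [Fintype E] [DecidableEq E]
    (𝒯 𝒜 : Finset (E → Bool)) : Prop :=
  𝒜 ⊆ 𝒯 ∧ IsCommittee 𝒯 (𝒜.image sgnNeg)

/-!
Since `𝒯 = −𝒯`, the map `𝒦 ↦ 𝒯 \ (−𝒦)` is an involution on the subsets of `𝒯` sending a
subset of size `k` to one of size `|𝒯| − k`. It preserves committees: for each `e`, `𝒯` has as many
members positive on `e` as negative on `e`, say `m`, and the members of `𝒯 \ (−𝒦)` positive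
(negative) on `e` number `m` minus the members of `𝒦` negative (positive) on `e`, so the strict
majority of `+` at `e` is inherited.
-/

open Finset

section

variable {E : Type*}

lemma sgnNeg_involutive : Function.Involutive (sgnNeg (E := E)) :=
  fun T => funext fun e => Bool.not_not (T e)

variable [Fintype E]

lemma card_filter_image_sgnNeg (s : Finset (E → Bool)) (e : E) (b : Bool) :
    #((s.image sgnNeg).filter (· e = b)) = #(s.filter (· e = !b)) := by
  rw [filter_image, card_image_of_injective _ sgnNeg_involutive.injective]
  congr 1
  exact filter_congr fun K _ => by simp [sgnNeg]

variable {𝒯 : Finset (E → Bool)}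

lemma card_filter_true_eq_card_filter_false (hsym : 𝒯.image sgnNeg = 𝒯) (e : E) :
    #(𝒯.filter (· e = true)) = #(𝒯.filter (· e = false)) := by
  conv_rhs => rw [← hsym]
  rw [card_filter_image_sgnNeg, Bool.not_false]

lemma image_sgnNeg_subset (hsym : 𝒯.image sgnNeg = 𝒯) {𝒦 : Finset (E → Bool)} (h : 𝒦 ⊆ 𝒯) :
    𝒦.image sgnNeg ⊆ 𝒯 :=
  hsym ▸ image_subset_image h

def complNeg (𝒯 𝒦 : Finset (E → Bool)) : Finset (E → Bool) :=
  𝒯 \ 𝒦.image sgnNeg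

lemma complNeg_subset (𝒦 : Finset (E → Bool)) : complNeg 𝒯 𝒦 ⊆ 𝒯 :=
  sdiff_subset

lemma card_complNeg (hsym : 𝒯.image sgnNeg = 𝒯) {𝒦 : Finset (E → Bool)} (h : 𝒦 ⊆ 𝒯) :
    #(complNeg 𝒯 𝒦) = #𝒯 - #𝒦 := by
  rw [complNeg, card_sdiff_of_subset (image_sgnNeg_subset hsym h),
    card_image_of_injective _ sgnNeg_involutive.injective]

lemma complNeg_complNeg (hsym : 𝒯.image sgnNeg = 𝒯) {𝒦 : Finset (E → Bool)} (h : 𝒦 ⊆ 𝒯) :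
    complNeg 𝒯 (complNeg 𝒯 𝒦) = 𝒦 := by
  rw [complNeg, complNeg, image_sdiff _ _ sgnNeg_involutive.injective, hsym, image_image,
    sgnNeg_involutive.comp_self, image_id, Finset.sdiff_sdiff_eq_self h]

lemma card_filter_complNeg (hsym : 𝒯.image sgnNeg = 𝒯) {𝒦 : Finset (E → Bool)} (h : 𝒦 ⊆ 𝒯)
    (e : E) (b : Bool) :
    #((complNeg 𝒯 𝒦).filter (· e = b)) = #(𝒯.filter (· e = b)) - #(𝒦.filter (· e = !b)) := by
  have hfilter : (complNeg 𝒯 𝒦).filter (· e = b) =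
      𝒯.filter (· e = b) \ (𝒦.image sgnNeg).filter (· e = b) := by
    ext K
    simp only [complNeg, mem_filter, mem_sdiff]
    tauto
  rw [hfilter, card_sdiff_of_subset (filter_subset_filter _ (image_sgnNeg_subset hsym h)),
    card_filter_image_sgnNeg]

variable [DecidableEq E]

lemma IsCommittee.complNeg (hsym : 𝒯.image sgnNeg = 𝒯) {𝒦 : Finset (E → Bool)}
    (h𝒦 : IsCommittee 𝒯 𝒦) : IsCommittee 𝒯 (complNeg 𝒯 𝒦) := by
  refine ⟨complNeg_subset 𝒦, fun e => ?_⟩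
  have hmajority := h𝒦.2 e
  have hbalance := card_filter_true_eq_card_filter_false hsym e
  have hle : #(𝒦.filter (· e = true)) ≤ #(𝒯.filter (· e = true)) :=
    card_le_card (filter_subset_filter _ h𝒦.1)
  rw [gt_iff_lt, card_filter_complNeg hsym h𝒦.1, card_filter_complNeg hsym h𝒦.1, Bool.not_true,
    Bool.not_false]
  omega

abbrev committeesOfCard (𝒯 : Finset (E → Bool)) (k : ℕ) : Set (Finset (E → Bool)) :=
  {𝒦 | IsCommittee 𝒯 𝒦 ∧ #𝒦 = k}

lemma mapsTo_complNeg_committeesOfCard (hsym : 𝒯.image sgnNeg = 𝒯) {k l : ℕ}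
    (hkl : k + l = #𝒯) :
    Set.MapsTo (complNeg 𝒯) (committeesOfCard 𝒯 k) (committeesOfCard 𝒯 l) :=
  fun _ ⟨h𝒦, hcard⟩ => ⟨h𝒦.complNeg hsym, by rw [card_complNeg hsym h𝒦.1, hcard]; omega⟩

end

theorem card_committees_symmetry_general
    {E : Type*} [Fintype E] [DecidableEq E]
    (𝒯 : Finset (E → Bool))
    (hsym : 𝒯.image sgnNeg = 𝒯) (k : ℕ) (hk : k ≤ 𝒯.card) :
    {𝒦 : Finset (E → Bool) | IsCommittee 𝒯 𝒦 ∧ 𝒦.card = k}.ncard =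
      {𝒦 : Finset (E → Bool) | IsCommittee 𝒯 𝒦 ∧ 𝒦.card = 𝒯.card - k}.ncard := by
  have hinv : Set.InvOn (complNeg 𝒯) (complNeg 𝒯) (committeesOfCard 𝒯 k)
      (committeesOfCard 𝒯 (#𝒯 - k)) :=
    ⟨fun _ h => complNeg_complNeg hsym h.1.1, fun _ h => complNeg_complNeg hsym h.1.1⟩
  exact Set.BijOn.ncard_eq <| hinv.bijOn (mapsTo_complNeg_committeesOfCard hsym (by omega))
    (mapsTo_complNeg_committeesOfCard hsym (by omega))

/-- For every `k` with `0 ≤ k ≤ |𝒯|`, the number of tope committees of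
cardinality `k` for `𝒯` equals the number of tope committees of cardinality `|𝒯| − k`. -/
theorem card_committees_symmetry
    {E : Type*} [Fintype E] [DecidableEq E] [Nonempty E]
    (𝒯 : Finset (E → Bool)) (h𝒯 : 𝒯.Nonempty)
    (hsym : 𝒯.image sgnNeg = 𝒯) (k : ℕ) (hk : k ≤ 𝒯.card) :
    {𝒦 : Finset (E → Bool) | IsCommittee 𝒯 𝒦 ∧ 𝒦.card = k}.ncard =
      {𝒦 : Finset (E → Bool) | IsCommittee 𝒯 𝒦 ∧ 𝒦.card = 𝒯.card - k}.ncard :=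
  card_committees_symmetry_general 𝒯 hsym k hk
end

section
/- Six times the number of three-element tope committees for 𝒯 equals the trace of the cube of the adjacency matrix of the graph Γ(𝒯): 6 · #K*₃(𝒯) = trace(A³), where A is the adjacency matrix of Γ(𝒯). -/
/-- The graph `Γ(𝒯)`: vertices are the members of `𝒯`, and distinct `T′, T″` are
adjacent iff `(T′)⁺ ∪ (T″)⁺ = E`. -/
def Gamma {E : Type*} [Fintype E] [DecidableEq E] (𝒯 : Finset (E → Bool)) :
    SimpleGraph {T : E → Bool // T ∈ 𝒯} where
  Adj T T' := T ≠ T' ∧ positivePart T.1 ∪ positivePart T'.1 = Finset.univ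
  symm := ⟨by rintro T T' ⟨h1, h2⟩; exact ⟨h1.symm, by rwa [Finset.union_comm]⟩⟩
  loopless := ⟨by rintro T ⟨h1, _⟩; exact h1 rfl⟩

instance {E : Type*} [Fintype E] [DecidableEq E] (𝒯 : Finset (E → Bool)) :
    DecidableRel (Gamma 𝒯).Adj := fun T T' =>
  inferInstanceAs (Decidable (T ≠ T' ∧ positivePart T.1 ∪ positivePart T'.1 = Finset.univ))

/-! Among three sign vectors, a strict majority is positive at `e` iff at most one of them is
negative at `e`, i.e. iff the positive parts of every two of them together contain `e`. So the
three-element committees are exactly the triangles of `Γ(𝒯)`, and `trace(A³)` counts each triangle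
once for each of its `3! = 6` orderings as a closed walk `u → v → w → u`. -/

open Finset

theorem Finset.card_filter_pairwise_ne_triples {α : Type*} [DecidableEq α] (s : Finset α) :
    #{p ∈ s ×ˢ s ×ˢ s | p.1 ≠ p.2.1 ∧ p.2.1 ≠ p.2.2 ∧ p.2.2 ≠ p.1} =
      #s * (#s - 1) * (#s - 2) := by
  have card_fiber (u) (hu : u ∈ s) :
      #{q ∈ s ×ˢ s | u ≠ q.1 ∧ q.1 ≠ q.2 ∧ q.2 ≠ u} = (#s - 1) * (#s - 2) := by
    have hfiber : {q ∈ s ×ˢ s | u ≠ q.1 ∧ q.1 ≠ q.2 ∧ q.2 ≠ u} = (s.erase u).offDiag := by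
      ext ⟨v, w⟩
      simp only [mem_filter, mem_product, mem_offDiag, mem_erase]
      tauto
    rw [hfiber, offDiag_card, card_erase_of_mem hu, ← Nat.mul_sub_one, Nat.sub_sub]
  rw [card_filter, sum_product, sum_congr rfl fun u hu => by rw [← card_filter, card_fiber u hu],
    sum_const, smul_eq_mul, mul_assoc]

theorem Finset.card_filter_false_lt_card_filter_true_iff_of_card_eq_three {α : Type*} {s : Finset α}
    (hs : #s = 3) (f : α → Bool) :
    #{a ∈ s | f a = false} < #{a ∈ s | f a = true} ↔
      ∀ a ∈ s, ∀ b ∈ s, a ≠ b → f a = true ∨ f b = true := by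
  have hsum : #{a ∈ s | f a = true} + #{a ∈ s | f a = false} = 3 := by
    simpa [hs] using card_filter_add_card_filter_not (s := s) (fun a => f a = true)
  have hmajority : #{a ∈ s | f a = false} < #{a ∈ s | f a = true} ↔
      #{a ∈ s | f a = false} ≤ 1 := by
    omega
  rw [hmajority, card_le_one]
  simp only [mem_filter, and_imp]
  grind

namespace SimpleGraph

theorem card_cliqueFinset_induce {V : Type*} [DecidableEq V] (G : SimpleGraph V)
    [DecidableRel G.Adj] (s : Finset V) (n : ℕ) :
    #((G.induce s).cliqueFinset n) = #{t ∈ s.powerset | G.IsNClique n t} := by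
  rw [← card_map (mapEmbedding (Function.Embedding.subtype (· ∈ s))).toEmbedding]
  congr 1
  ext t
  simp only [mem_map, mem_cliqueFinset_iff, RelEmbedding.coe_toEmbedding, mapEmbedding_apply,
    mem_filter, mem_powerset, isNClique_induce_iff]
  constructor
  · rintro ⟨u, hu, rfl⟩
    exact ⟨map_subtype_subset u, hu⟩
  · rintro ⟨hts, ht⟩
    have hmap : (t.subtype (· ∈ s)).map (.subtype (· ∈ s)) = t := subtype_map_of_mem hts
    exact ⟨t.subtype (· ∈ s), (congrArg (G.IsNClique n) hmap).mpr ht, hmap⟩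

variable {V : Type*} [Fintype V] [DecidableEq V] (G : SimpleGraph V) [DecidableRel G.Adj]

def orderedTriangles : Finset (V × V × V) :=
  {p | G.Adj p.1 p.2.1 ∧ G.Adj p.2.1 p.2.2 ∧ G.Adj p.2.2 p.1}

theorem trace_adjMatrix_pow_three (R : Type*) [Semiring R] :
    (G.adjMatrix R ^ 3).trace = #G.orderedTriangles := by
  simp only [orderedTriangles, card_filter, Nat.cast_sum, Fintype.sum_prod_type, Matrix.trace,
    Matrix.diag_apply, pow_three, Matrix.mul_apply, adjMatrix_apply, mul_sum, ite_and, ite_mul,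
    one_mul, zero_mul, Nat.cast_ite, Nat.cast_one, Nat.cast_zero]

theorem card_orderedTriangles : #G.orderedTriangles = 6 * #(G.cliqueFinset 3) := by
  have mem_cliqueFinset (p) (hp : p ∈ G.orderedTriangles) :
      ({p.1, p.2.1, p.2.2} : Finset V) ∈ G.cliqueFinset 3 := by
    obtain ⟨h₁, h₂, h₃⟩ := (mem_filter.1 hp).2
    exact mem_cliqueFinset_iff.2 (is3Clique_triple_iff.2 ⟨h₁, h₃.symm, h₂⟩)
  have card_fiber (t) (ht : t ∈ G.cliqueFinset 3) :
      #{p ∈ G.orderedTriangles | ({p.1, p.2.1, p.2.2} : Finset V) = t} = 6 := by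
    have ht := mem_cliqueFinset_iff.1 ht
    have hfiber : {p ∈ G.orderedTriangles | ({p.1, p.2.1, p.2.2} : Finset V) = t} =
        {p ∈ t ×ˢ t ×ˢ t | p.1 ≠ p.2.1 ∧ p.2.1 ≠ p.2.2 ∧ p.2.2 ≠ p.1} := by
      ext ⟨u, v, w⟩
      simp only [orderedTriangles, mem_filter, mem_univ, true_and, mem_product]
      constructor
      · rintro ⟨⟨huv, hvw, hwu⟩, rfl⟩
        simp [huv.ne, hvw.ne, hwu.ne]
      · rintro ⟨⟨hu, hv, hw⟩, huv, hvw, hwu⟩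
        refine ⟨⟨ht.1 hu hv huv, ht.1 hv hw hvw, ht.1 hw hu hwu⟩, ?_⟩
        refine eq_of_subset_of_card_le (by simp [insert_subset_iff, *]) ?_
        rw [ht.2, card_eq_three.2 ⟨u, v, w, huv, hwu.symm, hvw, rfl⟩]
    rw [hfiber, card_filter_pairwise_ne_triples, ht.2]
  rw [card_eq_sum_card_fiberwise mem_cliqueFinset, sum_congr rfl card_fiber, sum_const,
    smul_eq_mul, mul_comm]

end SimpleGraph

def coverGraph (E : Type*) : SimpleGraph (E → Bool) where
  Adj T T' := T ≠ T' ∧ ∀ e, T e = true ∨ T' e = true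
  symm := ⟨fun _ _ h => ⟨h.1.symm, fun e => (h.2 e).symm⟩⟩
  loopless := ⟨fun _ h => h.1 rfl⟩

section Committee

variable {E : Type*} [Fintype E] [DecidableEq E]

instance : DecidableRel (coverGraph E).Adj := fun T T' =>
  inferInstanceAs (Decidable (T ≠ T' ∧ ∀ e, T e = true ∨ T' e = true))

theorem gamma_eq_induce_coverGraph (𝒯 : Finset (E → Bool)) :
    Gamma 𝒯 = (coverGraph E).induce 𝒯 := by
  ext T T'
  simp only [Gamma, coverGraph, SimpleGraph.comap_adj, Function.Embedding.coe_subtype, ne_eq,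
    Subtype.ext_iff, positivePart, eq_univ_iff_forall, mem_union, mem_filter, mem_univ, true_and]

theorem isCommittee_iff_isClique {𝒯 𝒦 : Finset (E → Bool)} (h𝒦 : #𝒦 = 3) :
    IsCommittee 𝒯 𝒦 ↔ 𝒦 ⊆ 𝒯 ∧ (coverGraph E).IsClique (𝒦 : Set (E → Bool)) := by
  simp only [IsCommittee, gt_iff_lt, card_filter_false_lt_card_filter_true_iff_of_card_eq_three h𝒦]
  exact and_congr_right fun _ => ⟨fun h a ha b hb hab => ⟨hab, fun e => h e a ha b hb hab⟩,
    fun h e a ha b hb hab => (h ha hb hab).2 e⟩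

theorem isCommittee_and_card_eq_three_iff {𝒯 𝒦 : Finset (E → Bool)} :
    IsCommittee 𝒯 𝒦 ∧ #𝒦 = 3 ↔ 𝒦 ⊆ 𝒯 ∧ (coverGraph E).IsNClique 3 𝒦 := by
  rw [SimpleGraph.isNClique_iff, ← and_assoc]
  exact and_congr_left isCommittee_iff_isClique

theorem ncard_three_committees_eq_card_cliqueFinset (𝒯 : Finset (E → Bool)) :
    {𝒦 : Finset (E → Bool) | IsCommittee 𝒯 𝒦 ∧ #𝒦 = 3}.ncard =
      #((Gamma 𝒯).cliqueFinset 3) := by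
  have hcommittees : {𝒦 : Finset (E → Bool) | IsCommittee 𝒯 𝒦 ∧ #𝒦 = 3} =
      ↑{t ∈ 𝒯.powerset | (coverGraph E).IsNClique 3 t} := by
    ext 𝒦
    simp only [Set.mem_ofPred_eq, coe_filter, mem_powerset]
    exact isCommittee_and_card_eq_three_iff
  have hcliques : (Gamma 𝒯).cliqueFinset 3 = ((coverGraph E).induce 𝒯).cliqueFinset 3 := by
    ext t
    simp only [SimpleGraph.mem_cliqueFinset_iff, gamma_eq_induce_coverGraph]
  rw [hcommittees, Set.ncard_coe_finset, hcliques, SimpleGraph.card_cliqueFinset_induce]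

end Committee

theorem six_mul_card_three_committees_eq_trace_adjMatrix_cube_general
    {E : Type*} [Fintype E] [DecidableEq E]
    (𝒯 : Finset (E → Bool)) :
    6 * ({𝒦 : Finset (E → Bool) | IsCommittee 𝒯 𝒦 ∧ 𝒦.card = 3}.ncard : ℤ) =
      Matrix.trace ((Gamma 𝒯).adjMatrix ℤ ^ 3) := by
  rw [SimpleGraph.trace_adjMatrix_pow_three, SimpleGraph.card_orderedTriangles,
    ncard_three_committees_eq_card_cliqueFinset, Nat.cast_mul, Nat.cast_ofNat]

/-- `6 · #K*₃(𝒯) = trace(A³)`, where `A` is the adjacency matrix of `Γ(𝒯)`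
and `K*₃(𝒯)` is the family of tope committees of cardinality 3 for `𝒯`. -/
theorem six_mul_card_three_committees_eq_trace_adjMatrix_cube
    {E : Type*} [Fintype E] [DecidableEq E] [Nonempty E]
    (𝒯 : Finset (E → Bool)) (h𝒯 : 𝒯.Nonempty)
    (hsym : 𝒯.image sgnNeg = 𝒯) :
    6 * ({𝒦 : Finset (E → Bool) | IsCommittee 𝒯 𝒦 ∧ 𝒦.card = 3}.ncard : ℤ) =
      Matrix.trace ((Gamma 𝒯).adjMatrix ℤ ^ 3) :=
  six_mul_card_three_committees_eq_trace_adjMatrix_cube_general 𝒯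
end

section
/- The vertex set of any odd cycle in the graph Γ(𝒯) is a tope committee for 𝒯; that is, if T₀, T₁, …, T₂ₘ are distinct members of 𝒯 such that Tᵢ and Tᵢ₊₁ (indices modulo 2m+1) are adjacent in Γ(𝒯) for all i, then {T₀, T₁, …, T₂ₘ} is a tope committee for 𝒯. -/
/-! For a fixed `e`, adjacent topes of `Γ(𝒯)` cannot both be negative at `e`, so the positions
of the cycle negative at `e` form a set that the shift `i ↦ i + 1` maps injectively into its
complement. As the cycle has odd length `2m + 1`, that set is strictly smaller than its
complement. -/

open Finset

theorem Finset.card_lt_card_compl_of_forall_map_notMem {α : Type*} [Fintype α] [DecidableEq α]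
    (hodd : Odd (Fintype.card α)) {f : α → α} (hf : Function.Injective f) {S : Finset α}
    (hS : ∀ a ∈ S, f a ∉ S) : #S < #Sᶜ := by
  have hle : #S ≤ #Sᶜ :=
    card_le_card_of_injOn f (fun a ha => mem_compl.2 (hS a ha)) hf.injOn
  have hsum : #S + #Sᶜ = Fintype.card α := card_add_card_compl S
  obtain ⟨k, hk⟩ := hodd
  omega

theorem Gamma.apply_eq_true_or_of_adj {E : Type*} [Fintype E] [DecidableEq E]
    {𝒯 : Finset (E → Bool)} {T T' : {T : E → Bool // T ∈ 𝒯}} (h : (Gamma 𝒯).Adj T T')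
    (e : E) : T.1 e = true ∨ T'.1 e = true := by
  have he : e ∈ positivePart T.1 ∪ positivePart T'.1 := h.2 ▸ mem_univ e
  simpa [positivePart] using he

theorem odd_cycle_is_committee_general
    {E : Type*} [Fintype E] [DecidableEq E]
    (𝒯 : Finset (E → Bool))
    (m : ℕ) (T : Fin (2 * m + 1) → E → Bool)
    (hmem : ∀ i, T i ∈ 𝒯) (hinj : Function.Injective T)
    (hadj : ∀ i, (Gamma 𝒯).Adj ⟨T i, hmem i⟩ ⟨T (i + 1), hmem (i + 1)⟩) :
    IsCommittee 𝒯 (Finset.image T Finset.univ) := by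
  refine ⟨image_subset_iff.2 fun i _ => hmem i, fun e => ?_⟩
  set S := univ.filter fun i => T i e = false
  have hS : ∀ i ∈ S, i + 1 ∉ S := by
    intro i hi hi1
    simp only [S, mem_filter] at hi hi1
    simpa [hi.2, hi1.2] using Gamma.apply_eq_true_or_of_adj (hadj i) e
  have hlt := card_lt_card_compl_of_forall_map_notMem (by simp) (add_left_injective 1) hS
  simp only [filter_image, card_image_of_injective _ hinj]
  convert hlt using 2
  ext i
  simp [S]

/-- The vertex set of any odd cycle in `Γ(𝒯)` is a tope committee for `𝒯`:
if `T₀, …, T₂ₘ` are distinct members of `𝒯` with `Tᵢ` adjacent to `Tᵢ₊₁` (indices mod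
`2m+1`) in `Γ(𝒯)` for all `i`, then `{T₀, …, T₂ₘ}` is a tope committee for `𝒯`. -/
theorem odd_cycle_is_committee
    {E : Type*} [Fintype E] [DecidableEq E] [Nonempty E]
    (𝒯 : Finset (E → Bool)) (h𝒯 : 𝒯.Nonempty)
    (hsym : 𝒯.image sgnNeg = 𝒯)
    (m : ℕ) (T : Fin (2 * m + 1) → E → Bool)
    (hmem : ∀ i, T i ∈ 𝒯) (hinj : Function.Injective T)
    (hadj : ∀ i, (Gamma 𝒯).Adj ⟨T i, hmem i⟩ ⟨T (i + 1), hmem (i + 1)⟩) :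
    IsCommittee 𝒯 (Finset.image T Finset.univ) :=
  odd_cycle_is_committee_general 𝒯 m T hmem hinj hadj
end

section
/- If the induced subgraph Γ⁺_max(𝒯) of Γ(𝒯) on the vertex set max⁺(𝒯) is connected, then the graph Γ(𝒯) is connected. -/
/-- `max⁺(𝒯)`: the members of `𝒯` whose positive part is inclusion-maximal in
the family of positive parts of members of `𝒯`. -/
def maxPos {E : Type*} [Fintype E] [DecidableEq E] (𝒯 : Finset (E → Bool)) :
    Finset (E → Bool) :=
  𝒯.filter fun T => ∀ S ∈ 𝒯, positivePart T ⊆ positivePart S → positivePart T = positivePart S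

/-! Every `T ∈ 𝒯` is adjacent in `Γ(𝒯)` to some `M ∈ max⁺(𝒯)`: take `M` with `(−T)⁺ ⊆ M⁺`,
which exists because `−T ∈ 𝒯`. Then `T⁺ ∪ M⁺ ⊇ T⁺ ∪ (−T)⁺ = E`, and `M ≠ T` since otherwise
`T⁺ = E`, i.e. `T` is the all-plus vector. So every vertex is a neighbour of the connected
set `max⁺(𝒯)`. -/

theorem SimpleGraph.Connected.of_induce {V : Type*} {G : SimpleGraph V} {s : Set V}
    (hs : (G.induce s).Connected) (hreach : ∀ v, ∃ u ∈ s, G.Reachable v u) : G.Connected := by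
  have hreach_s : ∀ u v : s, G.Reachable u v := fun u v =>
    (hs.preconnected u v).map (SimpleGraph.Embedding.induce s).toHom
  obtain ⟨⟨u₀, -⟩⟩ := hs.nonempty
  have : Nonempty V := ⟨u₀⟩
  refine ⟨fun v w => ?_⟩
  obtain ⟨u, hu, hvu⟩ := hreach v
  obtain ⟨u', hu', hwu'⟩ := hreach w
  exact hvu.trans ((hreach_s ⟨u, hu⟩ ⟨u', hu'⟩).trans hwu'.symm)

section SignVectors

variable {E : Type*} [Fintype E] [DecidableEq E]

theorem positivePart_sgnNeg (T : E → Bool) : positivePart (sgnNeg T) = (positivePart T)ᶜ := by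
  ext e
  simp [positivePart, sgnNeg]

theorem positivePart_eq_univ_iff {T : E → Bool} :
    positivePart T = Finset.univ ↔ T = fun _ => true := by
  simp [positivePart, Finset.filter_eq_self, funext_iff]

theorem exists_mem_maxPos_positivePart_subset {𝒯 : Finset (E → Bool)} {T : E → Bool}
    (hT : T ∈ 𝒯) : ∃ S ∈ maxPos 𝒯, positivePart T ⊆ positivePart S := by
  obtain ⟨S, hS, hmax⟩ := Finset.exists_max_image
    (𝒯.filter fun S => positivePart T ⊆ positivePart S)
    (fun S => (positivePart S).card) ⟨T, by simp [hT]⟩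
  rw [Finset.mem_filter] at hS
  refine ⟨S, Finset.mem_filter.mpr ⟨hS.1, fun S' hS' hsub => ?_⟩, hS.2⟩
  exact Finset.eq_of_subset_of_card_le hsub
    (hmax S' (Finset.mem_filter.mpr ⟨hS', hS.2.trans hsub⟩))

theorem gamma_adj_of_positivePart_sgnNeg_subset {𝒯 : Finset (E → Bool)}
    (hplus : (fun _ : E => true) ∉ 𝒯) {T M : {T : E → Bool // T ∈ 𝒯}}
    (hsub : positivePart (sgnNeg T.1) ⊆ positivePart M.1) : (Gamma 𝒯).Adj T M := by
  rw [positivePart_sgnNeg] at hsub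
  have hcover : positivePart T.1 ∪ positivePart M.1 = Finset.univ := by
    refine Finset.eq_univ_of_forall fun e => ?_
    by_cases he : e ∈ positivePart T.1
    exacts [Finset.mem_union_left _ he, Finset.mem_union_right _ (hsub (Finset.mem_compl.mpr he))]
  refine ⟨fun hTM => hplus ?_, hcover⟩
  rw [← hTM, Finset.union_self, positivePart_eq_univ_iff] at hcover
  rw [← hcover]
  exact T.2

theorem exists_maxPos_gamma_adj {𝒯 : Finset (E → Bool)} (hsym : 𝒯.image sgnNeg = 𝒯)
    (hplus : (fun _ : E => true) ∉ 𝒯) (T : {T : E → Bool // T ∈ 𝒯}) :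
    ∃ M : {T : E → Bool // T ∈ 𝒯}, M.1 ∈ maxPos 𝒯 ∧ (Gamma 𝒯).Adj T M := by
  have hneg : sgnNeg T.1 ∈ 𝒯 := hsym.subset (Finset.mem_image_of_mem sgnNeg T.2)
  obtain ⟨M, hM, hsub⟩ := exists_mem_maxPos_positivePart_subset hneg
  exact ⟨⟨M, (Finset.mem_filter.mp hM).1⟩, hM, gamma_adj_of_positivePart_sgnNeg_subset hplus hsub⟩

end SignVectors

theorem gamma_connected_of_gammaMax_connected_general
    {E : Type*} [Fintype E] [DecidableEq E]
    (𝒯 : Finset (E → Bool))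
    (hsym : 𝒯.image sgnNeg = 𝒯)
    (hplus : (fun _ : E => true) ∉ 𝒯)
    (hconn : ((Gamma 𝒯).induce {T : {T : E → Bool // T ∈ 𝒯} | T.1 ∈ maxPos 𝒯}).Connected) :
    (Gamma 𝒯).Connected :=
  hconn.of_induce fun T =>
    let ⟨M, hM, hadj⟩ := exists_maxPos_gamma_adj hsym hplus T
    ⟨M, hM, hadj.reachable⟩

/-- If the subgraph `Γ⁺_max(𝒯)` of `Γ(𝒯)` induced on the vertex set
`max⁺(𝒯)` is connected, then the graph `Γ(𝒯)` is connected. -/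
theorem gamma_connected_of_gammaMax_connected
    {E : Type*} [Fintype E] [DecidableEq E] [Nonempty E]
    (𝒯 : Finset (E → Bool)) (h𝒯 : 𝒯.Nonempty)
    (hsym : 𝒯.image sgnNeg = 𝒯)
    (hplus : (fun _ : E => true) ∉ 𝒯)
    (hconn : ((Gamma 𝒯).induce {T : {T : E → Bool // T ∈ 𝒯} | T.1 ∈ maxPos 𝒯}).Connected) :
    (Gamma 𝒯).Connected :=
  gamma_connected_of_gammaMax_connected_general 𝒯 hsym hplus hconn
end

section
/- The number of three-element tope committees 𝒦 for 𝒯 with 𝒦 ⊆ max⁺(𝒯) equals the number of 3-element families {D₁, D₂, D₃} of pairwise disjoint subsets of E such that each Dᵢ is the negative part T⁻ of some T ∈ max⁺(𝒯). -/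
/-!
In a three-element family of sign vectors, `+` has a strict majority at `e` exactly when at most
one member is `−` at `e`; so the three-element committees are the three-element families with
pairwise disjoint negative parts. As `T ↦ T⁻` is injective, taking negative parts is a bijection
from these families inside `max⁺(𝒯)` onto the families `{D₁, D₂, D₃}` being counted.
-/

open Finset

theorem Finset.card_filter_eq_true_add_card_filter_eq_false {α : Type*} (s : Finset α)
    (p : α → Bool) : #{a ∈ s | p a = true} + #{a ∈ s | p a = false} = #s := by
  simpa using card_filter_add_card_filter_not (s := s) (fun a => p a = true)

section SignVectors

variable {E : Type*} [Fintype E] [DecidableEq E]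

@[simp]
theorem mem_negativePart {T : E → Bool} {e : E} : e ∈ negativePart T ↔ T e = false := by
  simp [negativePart]

theorem negativePart_injective : Function.Injective (negativePart (E := E)) := by
  intro T S h
  funext e
  simpa using congrArg (e ∈ ·) h

theorem pairwiseDisjoint_negativePart_iff (𝒦 : Finset (E → Bool)) :
    (𝒦 : Set (E → Bool)).PairwiseDisjoint negativePart ↔
      ∀ e, #{K ∈ 𝒦 | K e = false} ≤ 1 := by
  simp only [card_le_one, mem_filter, Set.PairwiseDisjoint, Set.Pairwise, mem_coe,
    Function.onFun, Finset.disjoint_left, mem_negativePart]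
  constructor
  · rintro h e K ⟨hK, hKe⟩ K' ⟨hK', hK'e⟩
    by_contra hne
    exact absurd hK'e (by simpa using h hK hK' hne hKe)
  · intro h K hK K' hK' hne e hKe hK'e
    exact hne (h e K ⟨hK, hKe⟩ K' ⟨hK', hK'e⟩)

theorem forall_majority_iff_pairwiseDisjoint_negativePart {𝒦 : Finset (E → Bool)}
    (h𝒦 : #𝒦 = 3) :
    (∀ e, #{K ∈ 𝒦 | K e = false} < #{K ∈ 𝒦 | K e = true}) ↔
      (𝒦 : Set (E → Bool)).PairwiseDisjoint negativePart := by
  rw [pairwiseDisjoint_negativePart_iff]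
  refine forall_congr' fun e => ?_
  have := card_filter_eq_true_add_card_filter_eq_false 𝒦 (· e)
  omega

theorem isCommittee_iff_pairwiseDisjoint_negativePart {𝒯 𝒦 : Finset (E → Bool)}
    (h𝒦 : #𝒦 = 3) :
    IsCommittee 𝒯 𝒦 ↔ 𝒦 ⊆ 𝒯 ∧ (𝒦 : Set (E → Bool)).PairwiseDisjoint negativePart :=
  and_congr_right' (forall_majority_iff_pairwiseDisjoint_negativePart h𝒦)

theorem pairwiseDisjoint_image_negativePart_iff (𝒦 : Finset (E → Bool)) :
    ((𝒦.image negativePart : Finset (Finset E)) : Set (Finset E)).PairwiseDisjoint id ↔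
      (𝒦 : Set (E → Bool)).PairwiseDisjoint negativePart := by
  rw [coe_image, negativePart_injective.injOn.pairwiseDisjoint_image]
  rfl

end SignVectors

theorem Finset.ncard_setOf_subset_image {α β : Type*} [DecidableEq β] {f : α → β}
    (hf : Function.Injective f) (S : Finset α) (P : Finset β → Prop) :
    {D | D ⊆ S.image f ∧ P D}.ncard = {K | K ⊆ S ∧ P (K.image f)}.ncard := by
  have : {D | D ⊆ S.image f ∧ P D} = image f '' {K | K ⊆ S ∧ P (K.image f)} := by
    ext D
    simp only [Set.mem_ofPred_eq, Set.mem_image, subset_image_iff]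
    constructor
    · rintro ⟨⟨K, hKS, rfl⟩, hP⟩
      exact ⟨K, ⟨hKS, hP⟩, rfl⟩
    · rintro ⟨K, ⟨hKS, hP⟩, rfl⟩
      exact ⟨⟨K, hKS, rfl⟩, hP⟩
  rw [this, Set.ncard_image_of_injective _ (image_injective hf)]

theorem card_three_committees_in_maxPos_eq_card_disjoint_negativePart_families_general
    {E : Type*} [Fintype E] [DecidableEq E]
    (𝒯 : Finset (E → Bool)) :
    {𝒦 : Finset (E → Bool) | IsCommittee 𝒯 𝒦 ∧ 𝒦.card = 3 ∧ 𝒦 ⊆ maxPos 𝒯}.ncard =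
      {D : Finset (Finset E) | D.card = 3 ∧
        (∀ d ∈ D, ∃ T ∈ maxPos 𝒯, negativePart T = d) ∧
        ∀ d ∈ D, ∀ d' ∈ D, d ≠ d' → d ∩ d' = ∅}.ncard := by
  set P : Finset (Finset E) → Prop := fun D => #D = 3 ∧ (D : Set (Finset E)).PairwiseDisjoint id
  have hcommittees : {𝒦 : Finset (E → Bool) | IsCommittee 𝒯 𝒦 ∧ #𝒦 = 3 ∧ 𝒦 ⊆ maxPos 𝒯} =
      {𝒦 | 𝒦 ⊆ maxPos 𝒯 ∧ P (𝒦.image negativePart)} := by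
    ext 𝒦
    simp only [Set.mem_ofPred_eq, P, card_image_of_injective _ negativePart_injective,
      pairwiseDisjoint_image_negativePart_iff]
    constructor
    · rintro ⟨hcomm, hcard, hmax⟩
      exact ⟨hmax, hcard, ((isCommittee_iff_pairwiseDisjoint_negativePart hcard).1 hcomm).2⟩
    · rintro ⟨hmax, hcard, hdisj⟩
      exact ⟨(isCommittee_iff_pairwiseDisjoint_negativePart hcard).2
        ⟨hmax.trans (filter_subset _ _), hdisj⟩, hcard, hmax⟩
  have hfamilies : {D : Finset (Finset E) | #D = 3 ∧
        (∀ d ∈ D, ∃ T ∈ maxPos 𝒯, negativePart T = d) ∧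
        ∀ d ∈ D, ∀ d' ∈ D, d ≠ d' → d ∩ d' = ∅} =
      {D | D ⊆ (maxPos 𝒯).image negativePart ∧ P D} := by
    ext D
    simp only [Set.mem_ofPred_eq, P, Set.PairwiseDisjoint, Set.Pairwise, mem_coe, Function.onFun,
      id, disjoint_iff_inter_eq_empty, subset_iff, mem_image]
    tauto
  rw [hcommittees, hfamilies, Finset.ncard_setOf_subset_image negativePart_injective]

/-- The number of three-element tope committees `𝒦` for `𝒯` with
`𝒦 ⊆ max⁺(𝒯)` equals the number of 3-element families `{D₁, D₂, D₃}` of pairwise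
disjoint subsets of `E` such that each `Dᵢ` is the negative part `T⁻` of some
`T ∈ max⁺(𝒯)`. -/
theorem card_three_committees_in_maxPos_eq_card_disjoint_negativePart_families
    {E : Type*} [Fintype E] [DecidableEq E] [Nonempty E]
    (𝒯 : Finset (E → Bool)) (h𝒯 : 𝒯.Nonempty)
    (hsym : 𝒯.image sgnNeg = 𝒯) :
    {𝒦 : Finset (E → Bool) | IsCommittee 𝒯 𝒦 ∧ 𝒦.card = 3 ∧ 𝒦 ⊆ maxPos 𝒯}.ncard =
      {D : Finset (Finset E) | D.card = 3 ∧
        (∀ d ∈ D, ∃ T ∈ maxPos 𝒯, negativePart T = d) ∧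
        ∀ d ∈ D, ∀ d' ∈ D, d ≠ d' → d ∩ d' = ∅}.ncard :=
  card_three_committees_in_maxPos_eq_card_disjoint_negativePart_families_general 𝒯
end
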